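/- Let λ ≥ 0, f ∈ L¹([0,1], r dr), L ∈ ℝ, and let {uₙ} be a sequence of smooth functions on [0,1] satisfying uₙ'(0) = 0, uₙ(1) = 0, which is bounded in the norm ‖u‖ = ( ∫₀¹ [u² + (u')² + (u'' + u'/r)²] r dr )^{1/2}, and which is a Palais–Smale sequence for I_λ at level L, meaning: I_λ(uₙ) → L, and sup { |I_λ'(uₙ)[φ]| : φ smooth with φ'(0)=0, φ(1)=0, ‖φ‖ ≤ 1 } → 0 as n → ∞, where I_λ'(u)[φ] = ∫₀¹ (u''+u'/r)(φ''+φ'/r) r dr + (1/2)∫₀¹ (u')²φ' dr − λ∫₀¹ fφ r dr. Then {uₙ} admits a subsequence that is Cauchy with respect to the norm u ↦ ( ∫₀¹ (u''(r) + u'(r)/r)² r dr )^{1/2}. -/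

import Mathlib

open MeasureTheory Set Filter

/-- The Navier energy functional `I_λ`. -/
noncomputable def Ifun (lam : ℝ) (f u : ℝ → ℝ) : ℝ :=
  (1 / 2) * (∫ r in (0:ℝ)..1, (deriv (deriv u) r + deriv u r / r) ^ 2 * r)
    + (1 / 6) * (∫ r in (0:ℝ)..1, (deriv u r) ^ 3)
    - lam * ∫ r in (0:ℝ)..1, f r * u r * r

/-- The first variation (derivative) of `I_λ` at `u` in the direction `φ`. -/
noncomputable def Ipair (lam : ℝ) (f u φ : ℝ → ℝ) : ℝ :=
  (∫ r in (0:ℝ)..1,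
      (deriv (deriv u) r + deriv u r / r) * (deriv (deriv φ) r + deriv φ r / r) * r)
    + (1 / 2) * (∫ r in (0:ℝ)..1, (deriv u r) ^ 2 * deriv φ r)
    - lam * ∫ r in (0:ℝ)..1, f r * φ r * r

/-- The squared radial `W^{2,2}([0,1], r dr)` norm used for the Navier problem. -/
noncomputable def NavierNormSq (u : ℝ → ℝ) : ℝ :=
  ∫ r in (0:ℝ)..1,
    ((u r) ^ 2 + (deriv u r) ^ 2 + (deriv (deriv u) r + deriv u r / r) ^ 2) * r

/-!
Since `(r u')' = r Δu` and `u'(0) = 0`, Cauchy–Schwarz turns the bound on `∫ (Δu)² r` into a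
uniform bound on `u'` and a Hölder-`1/2` bound on `r ↦ r u'(r)`. By Arzelà–Ascoli a subsequence
has `r uₙ'(r)` uniformly Cauchy on `[0, 1]`, hence `uₙ'` Cauchy in `L¹(0, 1)`: the weight `r` only
matters near `0`, where the `uₙ'` are uniformly bounded.

Testing `I_λ'(u_m) - I_λ'(u_n)` against `φ = (u_m - u_n) / c`, with `c` chosen so that
`‖φ‖ ≤ 1`, the source term `λ ∫ f φ r` cancels and
`∫ (Δu_m - Δu_n)² r = c (I_λ'(u_m) - I_λ'(u_n))[φ] - ½ ∫ (u_m'² - u_n'²)(u_m' - u_n')`.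
The first term is small by the Palais–Smale condition, the second by the `L¹` convergence of the
derivatives, since `|(a² - b²)(a - b)| ≤ 4 M² |a - b|` when `|a|, |b| ≤ M`.
-/

theorem sq_integral_mul_le_integral_mul_integral_mul_sq {α : Type*} [MeasurableSpace α]
    {μ : Measure α} {w g : α → ℝ} (hw : 0 ≤ᵐ[μ] w) (hw_int : Integrable w μ)
    (hwg : Integrable (fun x => w x * g x) μ) (hwg2 : Integrable (fun x => w x * g x ^ 2) μ) :
    (∫ x, w x * g x ∂μ) ^ 2 ≤ (∫ x, w x ∂μ) * ∫ x, w x * g x ^ 2 ∂μ := by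
  have hquad : ∀ t : ℝ, 0 ≤ (∫ x, w x ∂μ) * (t * t) + (2 * ∫ x, w x * g x ∂μ) * t
      + ∫ x, w x * g x ^ 2 ∂μ := by
    intro t
    have h : 0 ≤ ∫ x, w x * (t + g x) ^ 2 ∂μ :=
      integral_nonneg_of_ae (hw.mono fun x hx => mul_nonneg hx (sq_nonneg _))
    have e : (fun x => w x * (t + g x) ^ 2)
        = fun x => (t * t) * w x + (2 * t) * (w x * g x) + w x * g x ^ 2 := by
      ext; ring
    have h1 : Integrable (fun x => (t * t) * w x + (2 * t) * (w x * g x)) μ :=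
      (hw_int.const_mul _).add (hwg.const_mul _)
    rw [e, integral_add h1 hwg2, integral_add (hw_int.const_mul _) (hwg.const_mul _),
      integral_const_mul, integral_const_mul] at h
    linarith
  have hdisc := discrim_le_zero hquad
  rw [discrim] at hdisc
  linarith

theorem Equicontinuous.exists_strictMono_tendstoUniformly {X β : Type*} [TopologicalSpace X]
    [CompactSpace X] [MetricSpace β] {F : ℕ → X → β} (hF : Equicontinuous F) {s : Set β}
    (hs : IsCompact s) (hFs : ∀ n x, F n x ∈ s) :
    ∃ ns : ℕ → ℕ, StrictMono ns ∧ ∃ g : X → β, TendstoUniformly (fun i => F (ns i)) g atTop := by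
  let G : ℕ → BoundedContinuousFunction X β := fun n =>
    BoundedContinuousFunction.mkOfCompact ⟨F n, hF.continuous n⟩
  have hG : IsCompact (closure (range G)) := by
    refine BoundedContinuousFunction.arzela_ascoli s hs _ ?_ ?_
    · rintro _ x ⟨n, rfl⟩
      exact hFs n x
    · intro x U hU
      filter_upwards [hF x U hU] with y hy
      rintro ⟨_, n, rfl⟩
      exact hy n
  obtain ⟨g, -, ns, hns, hlim⟩ := hG.tendsto_subseq fun n => subset_closure (mem_range_self n)
  exact ⟨ns, hns, g, BoundedContinuousFunction.tendsto_iff_tendstoUniformly.mp hlim⟩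

theorem integral_abs_le_of_abs_mul_le {d : ℝ → ℝ} (hd : Continuous d) {K η δ : ℝ} (hδ : 0 < δ)
    (hδ1 : δ ≤ 1) (hK : ∀ r ∈ Icc (0:ℝ) 1, |d r| ≤ K) (hη : ∀ r ∈ Icc (0:ℝ) 1, |r * d r| ≤ η) :
    ∫ r in (0:ℝ)..1, |d r| ≤ K * δ + η / δ := by
  have hint : ∀ a b : ℝ, IntervalIntegrable (fun r => |d r|) volume a b :=
    hd.abs.intervalIntegrable
  have hη0 : 0 ≤ η := by simpa using hη 0 ⟨le_rfl, zero_le_one⟩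
  rw [← intervalIntegral.integral_add_adjacent_intervals (hint 0 δ) (hint δ 1)]
  gcongr
  · calc ∫ r in (0:ℝ)..δ, |d r| ≤ ∫ _ in (0:ℝ)..δ, K :=
          intervalIntegral.integral_mono_on hδ.le (hint 0 δ) intervalIntegrable_const
            fun r hr => hK r ⟨hr.1, hr.2.trans hδ1⟩
      _ = K * δ := by simp [mul_comm]
  · calc ∫ r in δ..1, |d r| ≤ ∫ _ in δ..1, η / δ :=
          intervalIntegral.integral_mono_on hδ1 (hint δ 1) intervalIntegrable_const
            fun r hr => ?_
      _ = (1 - δ) * (η / δ) := by simp [mul_div_assoc]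
      _ ≤ η / δ := by nlinarith [div_nonneg hη0 hδ.le]
    rw [le_div_iff₀ hδ]
    calc |d r| * δ ≤ |d r| * r := mul_le_mul_of_nonneg_left hr.1 (abs_nonneg _)
      _ = |r * d r| := by rw [abs_mul, abs_of_pos (hδ.trans_le hr.1), mul_comm]
      _ ≤ η := hη r ⟨hδ.le.trans hr.1, hr.2⟩

theorem abs_integral_sq_sub_sq_mul_sub_le {g h : ℝ → ℝ} (hg : Continuous g) (hh : Continuous h)
    {a b M : ℝ} (hab : a ≤ b) (hgM : ∀ r ∈ Icc a b, |g r| ≤ M) (hhM : ∀ r ∈ Icc a b, |h r| ≤ M) :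
    |∫ r in a..b, (g r ^ 2 - h r ^ 2) * (g r - h r)| ≤ 4 * M ^ 2 * ∫ r in a..b, |g r - h r| := by
  have hM0 : 0 ≤ M := (abs_nonneg _).trans (hgM a ⟨le_rfl, hab⟩)
  rw [← intervalIntegral.integral_const_mul]
  refine (intervalIntegral.abs_integral_le_integral_abs hab).trans
    (intervalIntegral.integral_mono_on hab (Continuous.intervalIntegrable (by fun_prop) a b)
      (Continuous.intervalIntegrable (by fun_prop) a b) fun r hr => ?_)
  have hsum : |g r + h r| ≤ 2 * M := (abs_add_le _ _).trans (by linarith [hgM r hr, hhM r hr])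
  have hdiff : |g r - h r| ≤ 2 * M := (abs_sub _ _).trans (by linarith [hgM r hr, hhM r hr])
  calc |(g r ^ 2 - h r ^ 2) * (g r - h r)| = |g r + h r| * |g r - h r| * |g r - h r| := by
        rw [← abs_mul, ← abs_mul]; ring_nf
    _ ≤ (2 * M) * (2 * M) * |g r - h r| := by gcongr
    _ = 4 * M ^ 2 * |g r - h r| := by ring

theorem deriv_sub' {v w : ℝ → ℝ} (hv : Differentiable ℝ v) (hw : Differentiable ℝ w) :
    deriv (v - w) = deriv v - deriv w :=
  funext fun r => deriv_sub (hv r) (hw r)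

theorem deriv_const_smul_field' (c : ℝ) (v : ℝ → ℝ) : deriv (c • v) = c • deriv v :=
  funext fun _ => deriv_const_smul_field c v

theorem deriv_const_smul_sub {v w : ℝ → ℝ} (hv : Differentiable ℝ v) (hw : Differentiable ℝ w)
    (c : ℝ) : deriv (c • (v - w)) = c • (deriv v - deriv w) := by
  rw [deriv_const_smul_field', deriv_sub' hv hw]

/-- At `r = 0` division by zero makes this `v''(0)` instead of the true `2 v''(0)`; integrals do
not see this point. -/
noncomputable def radialLaplacian (v : ℝ → ℝ) (r : ℝ) : ℝ :=
  deriv (deriv v) r + deriv v r / r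

section RadialLaplacian

variable {v w : ℝ → ℝ}

theorem radialLaplacian_eq_add_dslope (hv0 : deriv v 0 = 0) {r : ℝ} (hr : r ≠ 0) :
    radialLaplacian v r = deriv (deriv v) r + dslope (deriv v) 0 r := by
  simp [radialLaplacian, dslope_of_ne _ hr, slope_def_field, hv0]

theorem continuous_deriv_deriv_add_dslope (hv : ContDiff ℝ 2 v) :
    Continuous fun r => deriv (deriv v) r + dslope (deriv v) 0 r := by
  have hv' : ContDiff ℝ 1 (deriv v) := hv.deriv'
  refine (hv'.continuous_deriv le_rfl).add ?_
  rw [← continuousOn_univ, continuousOn_dslope univ_mem]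
  exact ⟨hv'.continuous.continuousOn, hv'.differentiable one_ne_zero 0⟩

theorem mul_radialLaplacian (hv0 : deriv v 0 = 0) (r : ℝ) :
    r * radialLaplacian v r = r * deriv (deriv v) r + deriv v r := by
  rcases eq_or_ne r 0 with rfl | hr
  · simp [hv0]
  · simp only [radialLaplacian]
    field_simp

theorem intervalIntegrable_radialLaplacian_mul_radialLaplacian_mul (hv : ContDiff ℝ 2 v)
    (hv0 : deriv v 0 = 0) (hw : ContDiff ℝ 2 w) (hw0 : deriv w 0 = 0) (a b : ℝ) :
    IntervalIntegrable (fun r => radialLaplacian v r * radialLaplacian w r * r) volume a b := by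
  refine ((((continuous_deriv_deriv_add_dslope hv).mul
    (continuous_deriv_deriv_add_dslope hw)).mul continuous_id).intervalIntegrable a b).congr_ae ?_
  filter_upwards [ae_restrict_of_ae (Measure.ae_ne volume 0)] with r hr
  simp [radialLaplacian_eq_add_dslope hv0 hr, radialLaplacian_eq_add_dslope hw0 hr]

theorem intervalIntegrable_radialLaplacian_sq_mul (hv : ContDiff ℝ 2 v) (hv0 : deriv v 0 = 0)
    (a b : ℝ) : IntervalIntegrable (fun r => radialLaplacian v r ^ 2 * r) volume a b := by
  simpa only [sq] using intervalIntegrable_radialLaplacian_mul_radialLaplacian_mul hv hv0 hv hv0 a b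

theorem continuous_mul_radialLaplacian (hv : ContDiff ℝ 2 v) (hv0 : deriv v 0 = 0) :
    Continuous fun r => r * radialLaplacian v r := by
  have hv' : ContDiff ℝ 1 (deriv v) := hv.deriv'
  simp_rw [mul_radialLaplacian hv0]
  exact (continuous_id.mul (hv'.continuous_deriv le_rfl)).add hv'.continuous

theorem integral_mul_radialLaplacian (hv : ContDiff ℝ 2 v) (hv0 : deriv v 0 = 0) (a b : ℝ) :
    ∫ r in a..b, r * radialLaplacian v r = b * deriv v b - a * deriv v a := by
  refine intervalIntegral.integral_eq_sub_of_hasDerivAt (f := fun r => r * deriv v r)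
    (fun x _ => ?_) ((continuous_mul_radialLaplacian hv hv0).intervalIntegrable a b)
  have hv' : ContDiff ℝ 1 (deriv v) := hv.deriv'
  refine ((hasDerivAt_id' x).fun_mul
    ((hv'.differentiable one_ne_zero x).hasDerivAt)).congr_deriv ?_
  rw [mul_radialLaplacian hv0]
  ring

theorem radialLaplacian_sub (hv : ContDiff ℝ 2 v) (hw : ContDiff ℝ 2 w) :
    radialLaplacian (v - w) = radialLaplacian v - radialLaplacian w := by
  ext r
  simp only [radialLaplacian, deriv_sub' (hv.differentiable two_ne_zero)
    (hw.differentiable two_ne_zero), deriv_sub' (hv.deriv'.differentiable one_ne_zero)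
    (hw.deriv'.differentiable one_ne_zero), Pi.sub_apply]
  ring

theorem radialLaplacian_const_smul (c : ℝ) (v : ℝ → ℝ) :
    radialLaplacian (c • v) = c • radialLaplacian v := by
  ext r
  simp only [radialLaplacian, deriv_const_smul_field', Pi.smul_apply, smul_eq_mul]
  ring

end RadialLaplacian

section RadialEstimates

variable {v : ℝ → ℝ}

theorem integral_radialLaplacian_sq_mul_nonneg :
    0 ≤ ∫ r in (0:ℝ)..1, radialLaplacian v r ^ 2 * r :=
  intervalIntegral.integral_nonneg zero_le_one fun _ hr => mul_nonneg (sq_nonneg _) hr.1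

theorem sq_mul_deriv_sub_mul_deriv_le (hv : ContDiff ℝ 2 v) (hv0 : deriv v 0 = 0) {B : ℝ}
    (hB : ∫ r in (0:ℝ)..1, radialLaplacian v r ^ 2 * r ≤ B) {a b : ℝ} (ha : 0 ≤ a) (hab : a ≤ b)
    (hb : b ≤ 1) : (b * deriv v b - a * deriv v a) ^ 2 ≤ (b ^ 2 - a ^ 2) / 2 * B := by
  have hint := intervalIntegrable_radialLaplacian_sq_mul hv hv0
  have hwg := (continuous_mul_radialLaplacian hv hv0).intervalIntegrable (μ := volume) a b
  have hwg2 : IntervalIntegrable (fun r => r * radialLaplacian v r ^ 2) volume a b := by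
    simpa only [mul_comm] using hint a b
  have hIoc := fun {f : ℝ → ℝ} (hf : IntervalIntegrable f volume a b) =>
    (intervalIntegrable_iff_integrableOn_Ioc_of_le hab).mp hf
  have hcs := sq_integral_mul_le_integral_mul_integral_mul_sq (μ := volume.restrict (Ioc a b))
    ((ae_restrict_mem measurableSet_Ioc).mono fun r hr => ha.trans hr.1.le)
    (hIoc (continuous_id.intervalIntegrable a b)) (hIoc hwg) (hIoc hwg2)
  simp only [← intervalIntegral.integral_of_le hab, integral_mul_radialLaplacian hv hv0,
    integral_id] at hcs
  have hmono : ∫ r in a..b, r * radialLaplacian v r ^ 2 ≤ B := by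
    refine le_trans ?_ hB
    simp only [mul_comm _ (radialLaplacian v _ ^ 2)]
    refine intervalIntegral.integral_mono_interval ha hab hb ?_ (hint 0 1)
    filter_upwards [ae_restrict_mem measurableSet_Ioc] with r hr
    exact mul_nonneg (sq_nonneg _) hr.1.le
  have hab2 : 0 ≤ (b ^ 2 - a ^ 2) / 2 := by nlinarith
  exact hcs.trans (mul_le_mul_of_nonneg_left hmono hab2)

theorem abs_deriv_le_sqrt (hv : ContDiff ℝ 2 v) (hv0 : deriv v 0 = 0) {B : ℝ}
    (hB : ∫ r in (0:ℝ)..1, radialLaplacian v r ^ 2 * r ≤ B) {r : ℝ} (hr : r ∈ Icc (0:ℝ) 1) :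
    |deriv v r| ≤ √B := by
  have hB0 := integral_radialLaplacian_sq_mul_nonneg.trans hB
  rcases hr.1.eq_or_lt with rfl | hr0
  · simp [hv0]
  have h := sq_mul_deriv_sub_mul_deriv_le hv hv0 hB le_rfl hr.1 hr.2
  simp only [zero_mul, sub_zero, mul_pow] at h
  refine Real.abs_le_sqrt (le_of_mul_le_mul_left ?_ (pow_pos hr0 2))
  nlinarith

theorem abs_mul_deriv_sub_mul_deriv_le (hv : ContDiff ℝ 2 v) (hv0 : deriv v 0 = 0) {B : ℝ}
    (hB : ∫ r in (0:ℝ)..1, radialLaplacian v r ^ 2 * r ≤ B) {a b : ℝ} (ha : a ∈ Icc (0:ℝ) 1)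
    (hb : b ∈ Icc (0:ℝ) 1) : |b * deriv v b - a * deriv v a| ≤ √(B * |b - a|) := by
  wlog hab : a ≤ b generalizing a b
  · rw [abs_sub_comm, abs_sub_comm b]
    exact this hb ha (le_of_not_ge hab)
  have hB0 := integral_radialLaplacian_sq_mul_nonneg.trans hB
  refine Real.abs_le_sqrt ((sq_mul_deriv_sub_mul_deriv_le hv hv0 hB ha.1 hab hb.2).trans ?_)
  rw [abs_of_nonneg (sub_nonneg.mpr hab)]
  nlinarith [mul_nonneg (mul_nonneg (sub_nonneg.2 hab) hB0)
    (by linarith [ha.2, hb.2] : (0:ℝ) ≤ 2 - a - b)]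

end RadialEstimates

theorem exists_strictMono_integral_abs_deriv_sub_lt {u : ℕ → ℝ → ℝ}
    (hu : ∀ n, ContDiff ℝ 2 (u n)) (hu0 : ∀ n, deriv (u n) 0 = 0) {B : ℝ}
    (hB : ∀ n, ∫ r in (0:ℝ)..1, radialLaplacian (u n) r ^ 2 * r ≤ B) :
    ∃ ns : ℕ → ℕ, StrictMono ns ∧ ∀ η > 0, ∃ N, ∀ m ≥ N, ∀ n ≥ N,
      ∫ r in (0:ℝ)..1, |deriv (u (ns m)) r - deriv (u (ns n)) r| < η := by
  have hM : ∀ n, ∀ r ∈ Icc (0:ℝ) 1, |deriv (u n) r| ≤ √B := fun n _ hr =>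
    abs_deriv_le_sqrt (hu n) (hu0 n) (hB n) hr
  let F : ℕ → Icc (0:ℝ) 1 → ℝ := fun n x => x * deriv (u n) x
  have hF : Equicontinuous F := by
    refine Metric.equicontinuous_of_continuity_modulus (fun t => √(B * t)) ?_ F fun x y n => ?_
    · simpa using ((continuous_const.mul continuous_id).sqrt.tendsto 0 :
        Tendsto (fun t => √(B * t)) _ _)
    · rw [Real.dist_eq, Subtype.dist_eq, Real.dist_eq, abs_sub_comm, abs_sub_comm (x : ℝ)]
      exact abs_mul_deriv_sub_mul_deriv_le (hu n) (hu0 n) (hB n) x.2 y.2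
  have hFM : ∀ n x, F n x ∈ Icc (-√B) √B := fun n x => abs_le.mp <| by
    rw [abs_mul, abs_of_nonneg x.2.1]
    exact (mul_le_of_le_one_left (abs_nonneg _) x.2.2).trans (hM n x x.2)
  obtain ⟨ns, hns, _, hlim⟩ := hF.exists_strictMono_tendstoUniformly isCompact_Icc hFM
  refine ⟨ns, hns, fun η hη => ?_⟩
  -- `δ < 1` is a split point with `2 √B δ < η / 2`
  set δ := η / (η + 4 * √B + 1)
  have hδ : 0 < δ := by positivity
  have hδ1 : δ ≤ 1 := (div_le_one (by positivity)).mpr (by linarith [Real.sqrt_nonneg B])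
  obtain ⟨N, hN⟩ := Metric.uniformCauchySeqOn_iff.mp
    hlim.tendstoUniformlyOn.uniformCauchySeqOn (η * δ / 2) (by positivity)
  refine ⟨N, fun m hm n hn => ?_⟩
  calc ∫ r in (0:ℝ)..1, |deriv (u (ns m)) r - deriv (u (ns n)) r|
      ≤ 2 * √B * δ + η * δ / 2 / δ := by
        refine integral_abs_le_of_abs_mul_le ?_ hδ hδ1 (fun r hr => ?_) (fun r hr => ?_)
        · exact ((hu _).continuous_deriv one_le_two).sub ((hu _).continuous_deriv one_le_two)
        · linarith [abs_sub (deriv (u (ns m)) r) (deriv (u (ns n)) r), hM (ns m) r hr,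
            hM (ns n) r hr]
        · rw [mul_sub]
          exact (hN m hm n hn ⟨r, hr⟩ (mem_univ _)).le
    _ < η := by
        have hcancel : η * δ / 2 / δ = η / 2 := by field_simp
        have hsmall : 2 * √B * δ < η / 2 := by
          rw [show 2 * √B * δ = 2 * √B * η / (η + 4 * √B + 1) by ring,
            div_lt_iff₀ (by positivity)]
          nlinarith [Real.sqrt_nonneg B]
        linarith

section NavierNorm

variable {v w : ℝ → ℝ}

theorem navierNormSq_eq_integral (v : ℝ → ℝ) :
    NavierNormSq v = ∫ r in (0:ℝ)..1, (v r ^ 2 + deriv v r ^ 2 + radialLaplacian v r ^ 2) * r :=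
  rfl

theorem intervalIntegrable_navierNormSq_integrand (hv : ContDiff ℝ 2 v) (hv0 : deriv v 0 = 0) :
    IntervalIntegrable (fun r => (v r ^ 2 + deriv v r ^ 2 + radialLaplacian v r ^ 2) * r)
      volume 0 1 := by
  have hd := hv.continuous_deriv one_le_two
  have hc := hv.continuous
  refine (intervalIntegrable_congr fun r _ => by ring).mp
    (((by fun_prop : Continuous fun r => (v r ^ 2 + deriv v r ^ 2) * r).intervalIntegrable 0 1).add
      (intervalIntegrable_radialLaplacian_sq_mul hv hv0 0 1))

theorem integral_radialLaplacian_sq_mul_le_navierNormSq (hv : ContDiff ℝ 2 v)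
    (hv0 : deriv v 0 = 0) : ∫ r in (0:ℝ)..1, radialLaplacian v r ^ 2 * r ≤ NavierNormSq v := by
  rw [navierNormSq_eq_integral]
  refine intervalIntegral.integral_mono_on zero_le_one
    (intervalIntegrable_radialLaplacian_sq_mul hv hv0 0 1)
    (intervalIntegrable_navierNormSq_integrand hv hv0) fun r hr => ?_
  nlinarith [mul_nonneg (add_nonneg (sq_nonneg (v r)) (sq_nonneg (deriv v r))) hr.1]

theorem navierNormSq_const_smul (c : ℝ) (v : ℝ → ℝ) :
    NavierNormSq (c • v) = c ^ 2 * NavierNormSq v := by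
  simp only [navierNormSq_eq_integral, deriv_const_smul_field', radialLaplacian_const_smul,
    ← intervalIntegral.integral_const_mul, Pi.smul_apply, smul_eq_mul]
  congr 1
  ext r
  ring

theorem navierNormSq_sub_le (hv : ContDiff ℝ 2 v) (hv0 : deriv v 0 = 0) (hw : ContDiff ℝ 2 w)
    (hw0 : deriv w 0 = 0) : NavierNormSq (v - w) ≤ 2 * (NavierNormSq v + NavierNormSq w) := by
  have hd := deriv_sub' (hv.differentiable two_ne_zero) (hw.differentiable two_ne_zero)
  have hvw0 : deriv (v - w) 0 = 0 := by simp [hd, hv0, hw0]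
  have hv' := intervalIntegrable_navierNormSq_integrand hv hv0
  have hw' := intervalIntegrable_navierNormSq_integrand hw hw0
  simp only [navierNormSq_eq_integral]
  rw [← intervalIntegral.integral_add hv' hw',
    ← intervalIntegral.integral_const_mul]
  refine intervalIntegral.integral_mono_on zero_le_one
    (intervalIntegrable_navierNormSq_integrand (hv.sub hw) hvw0) ((hv'.add hw').const_mul 2)
    fun r hr => ?_
  rw [hd, radialLaplacian_sub hv hw]
  simp only [Pi.sub_apply]
  nlinarith [mul_nonneg (add_nonneg (add_nonneg (sq_nonneg (v r + w r))
    (sq_nonneg (deriv v r + deriv w r))) (sq_nonneg (radialLaplacian v r + radialLaplacian w r)))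
    hr.1]

end NavierNorm

theorem ipair_eq (lam : ℝ) (f u φ : ℝ → ℝ) :
    Ipair lam f u φ =
      (∫ r in (0:ℝ)..1, radialLaplacian u r * radialLaplacian φ r * r)
        + 1 / 2 * (∫ r in (0:ℝ)..1, deriv u r ^ 2 * deriv φ r)
        - lam * ∫ r in (0:ℝ)..1, f r * φ r * r :=
  rfl

theorem ipair_sub_ipair (lam : ℝ) (f : ℝ → ℝ) {P Q φ : ℝ → ℝ} (hP : ContDiff ℝ 2 P)
    (hP0 : deriv P 0 = 0) (hQ : ContDiff ℝ 2 Q) (hQ0 : deriv Q 0 = 0) (hφ : ContDiff ℝ 2 φ)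
    (hφ0 : deriv φ 0 = 0) :
    Ipair lam f P φ - Ipair lam f Q φ =
      (∫ r in (0:ℝ)..1, (radialLaplacian P r - radialLaplacian Q r) * radialLaplacian φ r * r)
        + 1 / 2 * ∫ r in (0:ℝ)..1, (deriv P r ^ 2 - deriv Q r ^ 2) * deriv φ r := by
  have hdP := hP.continuous_deriv one_le_two
  have hdQ := hQ.continuous_deriv one_le_two
  have hdφ := hφ.continuous_deriv one_le_two
  have hlap : ∫ r in (0:ℝ)..1,
        (radialLaplacian P r - radialLaplacian Q r) * radialLaplacian φ r * r
      = (∫ r in (0:ℝ)..1, radialLaplacian P r * radialLaplacian φ r * r)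
        - ∫ r in (0:ℝ)..1, radialLaplacian Q r * radialLaplacian φ r * r := by
    rw [← intervalIntegral.integral_sub
      (intervalIntegrable_radialLaplacian_mul_radialLaplacian_mul hP hP0 hφ hφ0 0 1)
      (intervalIntegrable_radialLaplacian_mul_radialLaplacian_mul hQ hQ0 hφ hφ0 0 1)]
    congr 1; ext r; ring
  have hcubic : ∫ r in (0:ℝ)..1, (deriv P r ^ 2 - deriv Q r ^ 2) * deriv φ r
      = (∫ r in (0:ℝ)..1, deriv P r ^ 2 * deriv φ r)
        - ∫ r in (0:ℝ)..1, deriv Q r ^ 2 * deriv φ r := by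
    rw [← intervalIntegral.integral_sub (Continuous.intervalIntegrable (by fun_prop) 0 1)
      (Continuous.intervalIntegrable (by fun_prop) 0 1)]
    congr 1; ext r; ring
  rw [hlap, hcubic, ipair_eq, ipair_eq]
  ring

theorem integral_sq_radialLaplacian_sub_eq (lam : ℝ) (f : ℝ → ℝ) {P Q : ℝ → ℝ}
    (hP : ContDiff ℝ 2 P) (hP0 : deriv P 0 = 0) (hQ : ContDiff ℝ 2 Q) (hQ0 : deriv Q 0 = 0)
    {c : ℝ} (hc : c ≠ 0) :
    ∫ r in (0:ℝ)..1, (radialLaplacian P r - radialLaplacian Q r) ^ 2 * r =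
      c * (Ipair lam f P (c⁻¹ • (P - Q)) - Ipair lam f Q (c⁻¹ • (P - Q)))
        - 1 / 2 * ∫ r in (0:ℝ)..1, (deriv P r ^ 2 - deriv Q r ^ 2) * (deriv P r - deriv Q r) := by
  have hd := deriv_const_smul_sub (hP.differentiable two_ne_zero) (hQ.differentiable two_ne_zero)
    c⁻¹
  have hφ0 : deriv (c⁻¹ • (P - Q)) 0 = 0 := by simp [hd, hP0, hQ0]
  rw [ipair_sub_ipair (φ := c⁻¹ • (P - Q)) lam f hP hP0 hQ hQ0 ((hP.sub hQ).const_smul c⁻¹) hφ0,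
    hd, radialLaplacian_const_smul, radialLaplacian_sub hP hQ]
  simp only [Pi.smul_apply, Pi.sub_apply, smul_eq_mul]
  have hlap : ∫ r in (0:ℝ)..1, (radialLaplacian P r - radialLaplacian Q r)
        * (c⁻¹ * (radialLaplacian P r - radialLaplacian Q r)) * r
      = c⁻¹ * ∫ r in (0:ℝ)..1, (radialLaplacian P r - radialLaplacian Q r) ^ 2 * r := by
    rw [← intervalIntegral.integral_const_mul]; congr 1; ext r; ring
  have hcubic : ∫ r in (0:ℝ)..1,
        (deriv P r ^ 2 - deriv Q r ^ 2) * (c⁻¹ * (deriv P r - deriv Q r))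
      = c⁻¹ * ∫ r in (0:ℝ)..1, (deriv P r ^ 2 - deriv Q r ^ 2) * (deriv P r - deriv Q r) := by
    rw [← intervalIntegral.integral_const_mul]; congr 1; ext r; ring
  rw [hlap, hcubic]
  field_simp
  ring

/-- `‖I_λ'(u)‖ ≤ κ` in the dual of the Navier space. -/
def IsAlmostCritical (lam : ℝ) (f u : ℝ → ℝ) (κ : ℝ) : Prop :=
  ∀ φ : ℝ → ℝ, ContDiff ℝ (⊤ : ℕ∞) φ → deriv φ 0 = 0 → φ 1 = 0 → NavierNormSq φ ≤ 1 →
    |Ipair lam f u φ| ≤ κ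

theorem integral_sq_radialLaplacian_sub_le {lam κ B : ℝ} {f P Q : ℝ → ℝ}
    (hP : ContDiff ℝ (⊤ : ℕ∞) P) (hP0 : deriv P 0 = 0) (hP1 : P 1 = 0)
    (hQ : ContDiff ℝ (⊤ : ℕ∞) Q) (hQ0 : deriv Q 0 = 0) (hQ1 : Q 1 = 0)
    (hPB : NavierNormSq P ≤ B) (hQB : NavierNormSq Q ≤ B)
    (hPκ : IsAlmostCritical lam f P κ) (hQκ : IsAlmostCritical lam f Q κ) :
    ∫ r in (0:ℝ)..1, (radialLaplacian P r - radialLaplacian Q r) ^ 2 * r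
      ≤ 2 * (2 * √B + 1) * κ + 2 * B * ∫ r in (0:ℝ)..1, |deriv P r - deriv Q r| := by
  have hP2 : ContDiff ℝ 2 P := hP.of_le (WithTop.coe_le_coe.mpr le_top)
  have hQ2 : ContDiff ℝ 2 Q := hQ.of_le (WithTop.coe_le_coe.mpr le_top)
  have hPΔ := (integral_radialLaplacian_sq_mul_le_navierNormSq hP2 hP0).trans hPB
  have hQΔ := (integral_radialLaplacian_sq_mul_le_navierNormSq hQ2 hQ0).trans hQB
  have hB0 : 0 ≤ B := integral_radialLaplacian_sq_mul_nonneg.trans hPΔ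
  set c := 2 * √B + 1
  have hc : 0 < c := by positivity
  have hφ : ContDiff ℝ (⊤ : ℕ∞) (c⁻¹ • (P - Q)) := (hP.sub hQ).const_smul c⁻¹
  have hφ0 : deriv (c⁻¹ • (P - Q)) 0 = 0 := by
    simp [deriv_const_smul_sub (hP2.differentiable two_ne_zero) (hQ2.differentiable two_ne_zero),
      hP0, hQ0]
  have hφ1 : (c⁻¹ • (P - Q)) 1 = 0 := by simp [hP1, hQ1]
  have hφN : NavierNormSq (c⁻¹ • (P - Q)) ≤ 1 := by
    rw [navierNormSq_const_smul, inv_pow, inv_mul_le_one₀ (by positivity)]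
    nlinarith [navierNormSq_sub_le hP2 hP0 hQ2 hQ0, Real.sq_sqrt hB0, Real.sqrt_nonneg B]
  have hIP := abs_le.mp (hPκ _ hφ hφ0 hφ1 hφN)
  have hIQ := abs_le.mp (hQκ _ hφ hφ0 hφ1 hφN)
  have hcubic := abs_integral_sq_sub_sq_mul_sub_le (hP2.continuous_deriv one_le_two)
    (hQ2.continuous_deriv one_le_two) zero_le_one
    (fun r hr => abs_deriv_le_sqrt hP2 hP0 hPΔ hr) (fun r hr => abs_deriv_le_sqrt hQ2 hQ0 hQΔ hr)
  rw [Real.sq_sqrt hB0] at hcubic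
  rw [integral_sq_radialLaplacian_sub_eq lam f hP2 hP0 hQ2 hQ0 hc.ne']
  nlinarith [abs_le.mp hcubic]

theorem stmt14_general (lam : ℝ) (f : ℝ → ℝ)
    (u : ℕ → ℝ → ℝ) (hsm : ∀ n, ContDiff ℝ (⊤ : ℕ∞) (u n))
    (hbc : ∀ n, deriv (u n) 0 = 0 ∧ u n 1 = 0)
    (hbdd : ∃ B : ℝ, ∀ n, NavierNormSq (u n) ≤ B)
    (hPS2 : ∀ ε > (0:ℝ), ∃ N : ℕ, ∀ n ≥ N, ∀ φ : ℝ → ℝ,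
      ContDiff ℝ (⊤ : ℕ∞) φ → deriv φ 0 = 0 → φ 1 = 0 →
      NavierNormSq φ ≤ 1 → |Ipair lam f (u n) φ| ≤ ε) :
    ∃ ns : ℕ → ℕ, StrictMono ns ∧
      ∀ ε > (0:ℝ), ∃ N : ℕ, ∀ m ≥ N, ∀ n ≥ N,
        Real.sqrt (∫ r in (0:ℝ)..1,
          ((deriv (deriv (u (ns m))) r + deriv (u (ns m)) r / r)
            - (deriv (deriv (u (ns n))) r + deriv (u (ns n)) r / r)) ^ 2 * r) < ε := by
  obtain ⟨B, hB⟩ := hbdd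
  have hu : ∀ n, ContDiff ℝ 2 (u n) := fun n => (hsm n).of_le (WithTop.coe_le_coe.mpr le_top)
  have hΔ : ∀ n, ∫ r in (0:ℝ)..1, radialLaplacian (u n) r ^ 2 * r ≤ B := fun n =>
    (integral_radialLaplacian_sq_mul_le_navierNormSq (hu n) (hbc n).1).trans (hB n)
  have hB0 : 0 ≤ B := integral_radialLaplacian_sq_mul_nonneg.trans (hΔ 0)
  obtain ⟨ns, hns, hcauchy⟩ := exists_strictMono_integral_abs_deriv_sub_lt hu (fun n => (hbc n).1) hΔ
  refine ⟨ns, hns, fun ε hε => ?_⟩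
  obtain ⟨N₁, hN₁⟩ := hPS2 (ε ^ 2 / (8 * (2 * √B + 1))) (by positivity)
  obtain ⟨N₂, hN₂⟩ := hcauchy (ε ^ 2 / (8 * (B + 1))) (by positivity)
  refine ⟨max N₁ N₂, fun m hm n hn => ?_⟩
  have hcrit : ∀ k ≥ max N₁ N₂, IsAlmostCritical lam f (u (ns k)) (ε ^ 2 / (8 * (2 * √B + 1))) :=
    fun k hk => hN₁ _ ((le_of_max_le_left hk).trans (hns.id_le k))
  have hest := integral_sq_radialLaplacian_sub_le (hsm _) (hbc _).1 (hbc _).2 (hsm _) (hbc _).1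
    (hbc _).2 (hB _) (hB _) (hcrit m hm) (hcrit n hn)
  have hL1 := hN₂ m (le_of_max_le_right hm) n (le_of_max_le_right hn)
  have hPS : 2 * (2 * √B + 1) * (ε ^ 2 / (8 * (2 * √B + 1))) = ε ^ 2 / 4 := by
    field_simp; ring
  have hη : 2 * B * (ε ^ 2 / (8 * (B + 1))) ≤ ε ^ 2 / 4 := by
    rw [mul_div_assoc', div_le_div_iff₀ (by positivity) (by norm_num)]
    nlinarith [sq_nonneg ε]
  rw [Real.sqrt_lt' hε]
  exact hest.trans_lt
    (by nlinarith [mul_le_mul_of_nonneg_left hL1.le (by positivity : 0 ≤ 2 * B), sq_pos_of_pos hε])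

/-- Every bounded Palais–Smale sequence for `I_λ` (Navier boundary conditions)
admits a subsequence which is Cauchy in the `L²(r dr)` norm of the radial Laplacian. -/
theorem stmt14 (lam : ℝ) (hlam : 0 ≤ lam) (f : ℝ → ℝ)
    (hf_int : IntegrableOn (fun r => f r * r) (Ioc 0 1) volume) (L : ℝ)
    (u : ℕ → ℝ → ℝ) (hsm : ∀ n, ContDiff ℝ (⊤ : ℕ∞) (u n))
    (hbc : ∀ n, deriv (u n) 0 = 0 ∧ u n 1 = 0)
    (hbdd : ∃ B : ℝ, ∀ n, NavierNormSq (u n) ≤ B)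
    (hPS1 : Tendsto (fun n => Ifun lam f (u n)) atTop (nhds L))
    (hPS2 : ∀ ε > (0:ℝ), ∃ N : ℕ, ∀ n ≥ N, ∀ φ : ℝ → ℝ,
      ContDiff ℝ (⊤ : ℕ∞) φ → deriv φ 0 = 0 → φ 1 = 0 →
      NavierNormSq φ ≤ 1 → |Ipair lam f (u n) φ| ≤ ε) :
    ∃ ns : ℕ → ℕ, StrictMono ns ∧
      ∀ ε > (0:ℝ), ∃ N : ℕ, ∀ m ≥ N, ∀ n ≥ N,
        Real.sqrt (∫ r in (0:ℝ)..1,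
          ((deriv (deriv (u (ns m))) r + deriv (u (ns m)) r / r)
            - (deriv (deriv (u (ns n))) r + deriv (u (ns n)) r / r)) ^ 2 * r) < ε :=
  stmt14_general lam f u hsm hbc hbdd hPS2
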